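/- There are, up to isomorphism, exactly 8 doppelsemigroups on a two-element set: the trivial ones C₂, L₂, O₂, LO₂, RO₂, together with C₂ ⋈ C₂⁻¹, O₂ ⋈ L₂ and L₂ ⋈ O₂; equivalently, the number of isomorphism classes of doppelsemigroups of order 2 is 8. -/

import Mathlib

/-- A doppelsemigroup structure on a type `D`. -/
structure DoppelSG (D : Type*) where
  l : D → D → D
  r : D → D → D
  l_assoc : ∀ x y z, l (l x y) z = l x (l y z)
  r_assoc : ∀ x y z, r (r x y) z = r x (r y z)
  d1 : ∀ x y z, r (l x y) z = l x (r y z)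
  d2 : ∀ x y z, l (r x y) z = r x (l y z)

/-- Isomorphism of doppelsemigroup structures on the same (two-element) carrier. -/
def DoppelIso {D : Type*} (A B : DoppelSG D) : Prop :=
  ∃ ψ : D ≃ D, (∀ x y, ψ (A.l x y) = B.l (ψ x) (ψ y)) ∧
               (∀ x y, ψ (A.r x y) = B.r (ψ x) (ψ y))

/-!
A doppelsemigroup on `Bool` is one of the `16 ^ 2` pairs of binary operations on `Bool` that
satisfies the axioms, and an isomorphism is one of the two permutations of `Bool`. So the
classification is a finite check: every doppelsemigroup of order two is isomorphic to one of eight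
explicit representatives, and no two of these are isomorphic.
-/

theorem Equivalence.card_quot_eq_of_representatives {α ι : Type*} {r : α → α → Prop}
    (hr : Equivalence r) (f : ι → α) (hcover : ∀ a, ∃ i, r a (f i))
    (hdistinct : ∀ i j, r (f i) (f j) → i = j) : Nat.card (Quot r) = Nat.card ι := by
  refine (Nat.card_eq_of_bijective (fun i => Quot.mk r (f i)) ⟨fun i j h => ?_, ?_⟩).symm
  · exact hdistinct i j ((hr.quot_mk_eq_iff _ _).mp h)
  · refine Quot.ind fun a => ?_
    obtain ⟨i, hi⟩ := hcover a
    exact ⟨i, (hr.quot_mk_eq_iff _ _).mpr (hr.symm hi)⟩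

namespace DoppelSG

variable {D : Type*}

def ofAssoc (m : D → D → D) (h : ∀ x y z, m (m x y) z = m x (m y z)) : DoppelSG D :=
  ⟨m, m, h, h, h, h⟩

def equivSubtype : DoppelSG D ≃
    {p : (D → D → D) × (D → D → D) //
      (∀ x y z, p.1 (p.1 x y) z = p.1 x (p.1 y z)) ∧ (∀ x y z, p.2 (p.2 x y) z = p.2 x (p.2 y z)) ∧
      (∀ x y z, p.2 (p.1 x y) z = p.1 x (p.2 y z)) ∧ (∀ x y z, p.1 (p.2 x y) z = p.2 x (p.1 y z))} where
  toFun A := ⟨(A.l, A.r), A.l_assoc, A.r_assoc, A.d1, A.d2⟩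
  invFun p := ⟨p.1.1, p.1.2, p.2.1, p.2.2.1, p.2.2.2.1, p.2.2.2.2⟩
  left_inv _ := rfl
  right_inv _ := rfl

instance [Fintype D] [DecidableEq D] : Fintype (DoppelSG D) :=
  Fintype.ofEquiv _ equivSubtype.symm

end DoppelSG

namespace DoppelIso

variable {D : Type*}

@[refl]
theorem refl (A : DoppelSG D) : DoppelIso A A :=
  ⟨Equiv.refl D, fun _ _ => rfl, fun _ _ => rfl⟩

@[symm]
theorem symm {A B : DoppelSG D} : DoppelIso A B → DoppelIso B A := by
  rintro ⟨ψ, hl, hr⟩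
  refine ⟨ψ.symm, fun x y => ψ.symm_apply_eq.mpr ?_, fun x y => ψ.symm_apply_eq.mpr ?_⟩
  · rw [hl]; simp
  · rw [hr]; simp

@[trans]
theorem trans {A B C : DoppelSG D} : DoppelIso A B → DoppelIso B C → DoppelIso A C := by
  rintro ⟨ψ, hl, hr⟩ ⟨φ, gl, gr⟩
  exact ⟨ψ.trans φ, fun x y => by simp [hl, gl], fun x y => by simp [hr, gr]⟩

theorem equivalence : Equivalence (@DoppelIso D) :=
  ⟨refl, symm, trans⟩

instance [Fintype D] [DecidableEq D] (A B : DoppelSG D) : Decidable (DoppelIso A B) := by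
  unfold DoppelIso; infer_instance

end DoppelIso

namespace DoppelSG

/- The representatives `C₂`, `L₂`, `O₂`, `LO₂`, `RO₂`, `C₂ ⋈ C₂⁻¹`, `O₂ ⋈ L₂`, `L₂ ⋈ O₂`, with `false`
as the identity of `C₂` and the zero of `L₂ = ({false, true}, min)` and `O₂`; in `C₂ ⋈ C₂⁻¹` the
variant is `x ⊢ y = x + true + y`. -/

def c2 : DoppelSG Bool := ofAssoc xor (by decide)

def l2 : DoppelSG Bool := ofAssoc and (by decide)

def o2 : DoppelSG Bool := ofAssoc (fun _ _ => false) (by decide)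

def lo2 : DoppelSG Bool := ofAssoc (fun x _ => x) (by decide)

def ro2 : DoppelSG Bool := ofAssoc (fun _ y => y) (by decide)

def c2Variant : DoppelSG Bool where
  l := xor
  r x y := !xor x y
  l_assoc := by decide
  r_assoc := by decide
  d1 := by decide
  d2 := by decide

def o2L2 : DoppelSG Bool where
  l _ _ := false
  r := and
  l_assoc := by decide
  r_assoc := by decide
  d1 := by decide
  d2 := by decide

def l2O2 : DoppelSG Bool where
  l := and
  r _ _ := false
  l_assoc := by decide
  r_assoc := by decide
  d1 := by decide
  d2 := by decide

def orderTwoRep : Fin 8 → DoppelSG Bool :=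
  ![c2, l2, o2, lo2, ro2, c2Variant, o2L2, l2O2]

theorem exists_doppelIso_orderTwoRep (A : DoppelSG Bool) : ∃ i, DoppelIso A (orderTwoRep i) := by
  revert A; decide

theorem orderTwoRep_doppelIso_iff (i j : Fin 8) : DoppelIso (orderTwoRep i) (orderTwoRep j) ↔ i = j := by
  revert i j; decide

end DoppelSG

theorem card_doppelsemigroups_order_two :
    Nat.card (Quot (fun A B : DoppelSG Bool => DoppelIso A B)) = 8 := by
  rw [DoppelIso.equivalence.card_quot_eq_of_representatives DoppelSG.orderTwoRep
    DoppelSG.exists_doppelIso_orderTwoRep fun i j => (DoppelSG.orderTwoRep_doppelIso_iff i j).mp, Nat.card_fin]
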